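/- For ϑ = (ϑ₁, ϑ₂, ϑ₃) ∈ ℝ³ define the Hermitian 2×2 matrix Δ(ϑ) with entries Δ(ϑ)₁₁ = 8, Δ(ϑ)₂₂ = 14 − 2(cos ϑ₁ + cos ϑ₂ + cos ϑ₃), Δ(ϑ)₁₂ = −(1 + e^{iϑ₁})(1 + e^{iϑ₂})(1 + e^{iϑ₃}), Δ(ϑ)₂₁ = −(1 + e^{−iϑ₁})(1 + e^{−iϑ₂})(1 + e^{−iϑ₃}). Then { λ ∈ ℝ : ∃ ϑ ∈ ℝ³, det(Δ(ϑ) − λ·I) = 0 } = [0, 8] ∪ [12, 20]. -/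
import Mathlib


open Matrix Complex

/-- The Floquet fiber matrix of the Laplacian on the body-centered cubic lattice. -/
noncomputable def bccFiber (ϑ : Fin 3 → ℝ) : Matrix (Fin 2) (Fin 2) ℂ :=
  !![(8 : ℝ),
     -((1 + Complex.exp (Complex.I * ϑ 0)) * (1 + Complex.exp (Complex.I * ϑ 1)) *
        (1 + Complex.exp (Complex.I * ϑ 2)));
     -((1 + Complex.exp (-Complex.I * ϑ 0)) * (1 + Complex.exp (-Complex.I * ϑ 1)) *
        (1 + Complex.exp (-Complex.I * ϑ 2))),
     ((14 - 2 * (Real.cos (ϑ 0) + Real.cos (ϑ 1) + Real.cos (ϑ 2))) : ℝ)]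

lemma bcc_key (θ : ℝ) :
    (1 + Complex.exp (Complex.I * θ)) * (1 + Complex.exp (-Complex.I * θ)) =
      ((2 + 2 * Real.cos θ : ℝ) : ℂ) := by
  have h1 : Complex.I * θ = (θ : ℂ) * Complex.I := by ring
  have h2 : -Complex.I * θ = ((-θ : ℝ) : ℂ) * Complex.I := by push_cast; ring
  rw [h1, h2, Complex.exp_mul_I, Complex.exp_mul_I]
  push_cast
  rw [Complex.cos_neg, Complex.sin_neg]
  linear_combination Complex.sin_sq_add_cos_sq (θ : ℂ) - (Complex.sin (θ:ℂ))^2 * Complex.I_sq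

lemma bcc_det_eq (ϑ : Fin 3 → ℝ) (x : ℝ) :
    (bccFiber ϑ - (x : ℂ) • (1 : Matrix (Fin 2) (Fin 2) ℂ)).det =
      (((8 - x) * (14 - 2 * (Real.cos (ϑ 0) + Real.cos (ϑ 1) + Real.cos (ϑ 2)) - x)
        - (2 + 2 * Real.cos (ϑ 0)) * (2 + 2 * Real.cos (ϑ 1)) * (2 + 2 * Real.cos (ϑ 2)) : ℝ) : ℂ) := by
  have hm : (bccFiber ϑ - (x : ℂ) • (1 : Matrix (Fin 2) (Fin 2) ℂ)) =
      !![((8 : ℝ) : ℂ) - x,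
         -((1 + Complex.exp (Complex.I * ϑ 0)) * (1 + Complex.exp (Complex.I * ϑ 1)) *
            (1 + Complex.exp (Complex.I * ϑ 2)));
         -((1 + Complex.exp (-Complex.I * ϑ 0)) * (1 + Complex.exp (-Complex.I * ϑ 1)) *
            (1 + Complex.exp (-Complex.I * ϑ 2))),
         (((14 - 2 * (Real.cos (ϑ 0) + Real.cos (ϑ 1) + Real.cos (ϑ 2))) : ℝ) : ℂ) - x] := by
    ext i j
    fin_cases i <;> fin_cases j <;>
      simp [bccFiber, Matrix.sub_apply, Matrix.smul_apply, Matrix.one_apply]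
  rw [hm, Matrix.det_fin_two_of]
  have k0 := bcc_key (ϑ 0); have k1 := bcc_key (ϑ 1); have k2 := bcc_key (ϑ 2)
  push_cast
  push_cast at k0 k1 k2
  linear_combination
    -(1 + Complex.exp (Complex.I * ϑ 1)) * (1 + Complex.exp (Complex.I * ϑ 2)) *
      (1 + Complex.exp (-Complex.I * ϑ 1)) * (1 + Complex.exp (-Complex.I * ϑ 2)) * k0 -
    (2 + 2 * Complex.cos ((ϑ 0 : ℝ) : ℂ)) * (1 + Complex.exp (Complex.I * ϑ 2)) *
      (1 + Complex.exp (-Complex.I * ϑ 2)) * k1 -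
    (2 + 2 * Complex.cos ((ϑ 0 : ℝ) : ℂ)) * (2 + 2 * Complex.cos ((ϑ 1 : ℝ) : ℂ)) * k2

lemma bcc_fwd (x c1 c2 c3 : ℝ) (h1 : -1 ≤ c1) (h1' : c1 ≤ 1) (h2 : -1 ≤ c2) (h2' : c2 ≤ 1)
    (h3 : -1 ≤ c3) (h3' : c3 ≤ 1)
    (E : (8 - x) * (14 - 2 * (c1 + c2 + c3) - x)
        - (2 + 2 * c1) * (2 + 2 * c2) * (2 + 2 * c3) = 0) :
    (0 ≤ x ∧ x ≤ 8) ∨ (12 ≤ x ∧ x ≤ 20) := by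
  by_contra hcon
  push_neg at hcon
  obtain ⟨hA, hB⟩ := hcon
  rcases lt_or_ge x 0 with hx0 | hx0
  · have hP : (2 + 2 * c1) * (2 + 2 * c2) * (2 + 2 * c3) ≤ 64 := by
      nlinarith [mul_nonneg (by linarith : (0:ℝ) ≤ 2 + 2*c1) (by linarith : (0:ℝ) ≤ 2 + 2*c2),
        mul_nonneg (mul_nonneg (by linarith : (0:ℝ) ≤ 2 + 2*c1) (by linarith : (0:ℝ) ≤ 2 + 2*c2)) (by linarith : (0:ℝ) ≤ 2 + 2*c3)]
    nlinarith [mul_pos (by linarith : (0:ℝ) < 8 - x) (by linarith : (0:ℝ) < 14 - 2*(c1+c2+c3) - x),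
      mul_nonneg (by linarith : (0:ℝ) ≤ 8 - x) (by linarith : (0:ℝ) ≤ 6 - 2*(c1+c2+c3))]
  · have hx8 : 8 < x := hA hx0
    rcases lt_or_ge x 12 with hx12 | hx12
    · have hPlow : 32 * (c1 + c2 + c3) - 32 ≤ (2 + 2 * c1) * (2 + 2 * c2) * (2 + 2 * c3) := by
        nlinarith [mul_nonneg (mul_nonneg (by linarith : (0:ℝ) ≤ 1 - c1) (by linarith : (0:ℝ) ≤ 1 - c2)) (by linarith : (0:ℝ) ≤ 1 + c3),
          mul_nonneg (by linarith : (0:ℝ) ≤ 2 - c1 - c2) (by linarith : (0:ℝ) ≤ 1 - c3)]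
      rcases le_or_gt (14 - 2*(c1+c2+c3) - x) 0 with hs | hs
      · rcases eq_or_lt_of_le hs with hs0 | hs0
        · have hP0 : (2 + 2 * c1) * (2 + 2 * c2) * (2 + 2 * c3) = 0 := by nlinarith
          rcases mul_eq_zero.mp hP0 with h | h
          · rcases mul_eq_zero.mp h with h' | h' <;> nlinarith
          · nlinarith
        · have hu : 1 < c1 + c2 + c3 := by linarith
          nlinarith [mul_pos (by linarith : (0:ℝ) < c1 + c2 + c3 - 1) (by linarith : (0:ℝ) < 16 - (x - 8)),
            mul_pos (by linarith : (0:ℝ) < x - 8) (by linarith : (0:ℝ) < 4 - (x - 8))]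
      · have hPpos : 0 ≤ (2 + 2 * c1) * (2 + 2 * c2) * (2 + 2 * c3) :=
          mul_nonneg (mul_nonneg (by linarith) (by linarith)) (by linarith)
        nlinarith [mul_pos (by linarith : (0:ℝ) < x - 8) hs]
    · have hx20 : 20 < x := hB hx12
      have hq : (0:ℝ) < x - 14 + 2*(c1+c2+c3) := by linarith
      have k1 : (2 + 2 * c1) * (2 + 2 * c2) * (2 + 2 * c3) ≤ 16 * (2 + 2*c3) := by
        nlinarith [mul_nonneg (by linarith : (0:ℝ) ≤ 2+2*c1) (by linarith : (0:ℝ) ≤ 2+2*c2),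
          mul_nonneg (mul_nonneg (by linarith : (0:ℝ) ≤ 2+2*c1) (by linarith : (0:ℝ) ≤ 2+2*c2)) (by linarith : (0:ℝ) ≤ 2+2*c3),
          mul_nonneg (by nlinarith : (0:ℝ) ≤ 16 - (2+2*c1)*(2+2*c2)) (by linarith : (0:ℝ) ≤ 2+2*c3)]
      have k2 : (2 + 2 * c1) * (2 + 2 * c2) * (2 + 2 * c3) ≤ 16 * (2 + 2*c2) := by
        nlinarith [mul_nonneg (by linarith : (0:ℝ) ≤ 2+2*c1) (by linarith : (0:ℝ) ≤ 2+2*c3),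
          mul_nonneg (by nlinarith : (0:ℝ) ≤ 16 - (2+2*c1)*(2+2*c3)) (by linarith : (0:ℝ) ≤ 2+2*c2)]
      have k3 : (2 + 2 * c1) * (2 + 2 * c2) * (2 + 2 * c3) ≤ 16 * (2 + 2*c1) := by
        nlinarith [mul_nonneg (by linarith : (0:ℝ) ≤ 2+2*c2) (by linarith : (0:ℝ) ≤ 2+2*c3),
          mul_nonneg (by nlinarith : (0:ℝ) ≤ 16 - (2+2*c2)*(2+2*c3)) (by linarith : (0:ℝ) ≤ 2+2*c1)]
      nlinarith [mul_pos (by linarith : (0:ℝ) < x - 8) hq, k1, k2, k3,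
        mul_lt_mul_of_pos_right (by linarith : (12:ℝ) < x - 8) hq]

/-- the spectrum of the Laplacian on the body-centered cubic lattice,
i.e. the set of real `x` which are eigenvalues of some fiber matrix `Δ(ϑ)`, equals
`[0, 8] ∪ [12, 20]`. -/
theorem bcc_spectrum :
    {x : ℝ | ∃ ϑ : Fin 3 → ℝ,
        (bccFiber ϑ - (x : ℂ) • (1 : Matrix (Fin 2) (Fin 2) ℂ)).det = 0} =
      Set.Icc (0 : ℝ) 8 ∪ Set.Icc (12 : ℝ) 20 := by
  ext x
  simp only [Set.mem_setOf_eq, Set.mem_union, Set.mem_Icc]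
  constructor
  · rintro ⟨ϑ, hϑ⟩
    rw [bcc_det_eq, Complex.ofReal_eq_zero] at hϑ
    exact bcc_fwd x (Real.cos (ϑ 0)) (Real.cos (ϑ 1)) (Real.cos (ϑ 2))
      (Real.neg_one_le_cos _) (Real.cos_le_one _) (Real.neg_one_le_cos _) (Real.cos_le_one _)
      (Real.neg_one_le_cos _) (Real.cos_le_one _) hϑ
  · rintro (⟨hx0, hx8⟩ | ⟨hx12, hx20⟩)
    · -- x ∈ [0,8] : intermediate value with c1 = c2 = c3 = c
      set f : ℝ → ℝ := fun c => (8 - x) * (14 - 2 * (c + c + c) - x) - (2 + 2*c) * (2 + 2*c) * (2 + 2*c) with hf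
      have hcont : ContinuousOn f (Set.Icc (-1 : ℝ) 1) := by
        apply Continuous.continuousOn; fun_prop
      have hmem : (0:ℝ) ∈ Set.Icc (f 1) (f (-1)) := by
        constructor
        · show f 1 ≤ 0
          simp only [hf]; nlinarith
        · show (0:ℝ) ≤ f (-1)
          simp only [hf]; nlinarith
      obtain ⟨c, hc, hfc⟩ := intermediate_value_Icc' (by norm_num : (-1:ℝ) ≤ 1) hcont hmem
      refine ⟨fun _ => Real.arccos c, ?_⟩
      rw [bcc_det_eq, Complex.ofReal_eq_zero]
      rw [Real.cos_arccos hc.1 hc.2]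
      simpa [hf] using hfc
    · -- x ∈ [12,20]
      have hb1 : -1 ≤ (16 - x)/4 := by linarith
      have hb2 : (16 - x)/4 ≤ 1 := by linarith
      refine ⟨![Real.pi, Real.arccos ((16 - x)/4), Real.arccos ((16 - x)/4)], ?_⟩
      rw [bcc_det_eq, Complex.ofReal_eq_zero]
      simp only [Matrix.cons_val_zero, Matrix.cons_val_one, Matrix.head_cons,
        Matrix.cons_val_two, Matrix.tail_cons]
      rw [Real.cos_pi, Real.cos_arccos hb1 hb2]
      ring
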